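/- arXiv:0806.2377 — 2 statements merged into one kernel-verified Lean document; each statement's English description precedes it below -/
import Mathlib

section
/- Let g ≥ 1, let U ⊆ ℂ^g be open, let σ : (Fin g → ℂ) → ℂ be analytic on U, and let u ∈ U with σ(u) ≠ 0. Then for any four indices i,j,k,l the 4-index Q-function satisfies Q_{ijkl}(u) = ℘_{ijkl}(u) − 2·℘_{ij}(u)·℘_{kl}(u) − 2·℘_{ik}(u)·℘_{jl}(u) − 2·℘_{il}(u)·℘_{jk}(u). -/
open scoped BigOperators

/-- Partial derivative in the `i`-th coordinate direction. -/
noncomputable def pd {g : ℕ} (i : Fin g) (f : (Fin g → ℂ) → ℂ) : (Fin g → ℂ) → ℂ :=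
  fun u => fderiv ℂ f u (Pi.single i 1)

/-- Iterated partial derivatives along a list of indices. -/
noncomputable def pdList {g : ℕ} (l : List (Fin g)) (f : (Fin g → ℂ) → ℂ) : (Fin g → ℂ) → ℂ :=
  l.foldr pd f

/-- The 2-index Kleinian ℘-function `℘_{ij} = (∂_iσ·∂_jσ − σ·∂_i∂_jσ)/σ²`. -/
noncomputable def wp2 {g : ℕ} (σ : (Fin g → ℂ) → ℂ) (i j : Fin g) : (Fin g → ℂ) → ℂ :=
  fun u => (pd i σ u * pd j σ u - σ u * pd i (pd j σ) u) / (σ u) ^ 2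

/-- The n-index Kleinian ℘-function `℘_{i j i₃ … iₙ} = ∂_{i₃}⋯∂_{iₙ} ℘_{ij}`. -/
noncomputable def wpN {g : ℕ} (σ : (Fin g → ℂ) → ℂ) (i j : Fin g) (rest : List (Fin g)) :
    (Fin g → ℂ) → ℂ :=
  pdList rest (wp2 σ i j)

/-- The diagonal value `(Δ_{i₁}⋯Δ_{iₙ} σ(u)σ(v))|_{v=u}
    = Σ_{S⊆{1,…,n}} (−1)^{|S|}·((∏_{k∈S}∂_{i_k})σ)(u)·((∏_{k∉S}∂_{i_k})σ)(u)`. -/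
noncomputable def hirotaDiag {g : ℕ} (σ : (Fin g → ℂ) → ℂ) (l : List (Fin g))
    (u : Fin g → ℂ) : ℂ :=
  ∑ S : Finset (Fin l.length),
    (-1 : ℂ) ^ S.card
      * pdList (((List.finRange l.length).filter (fun k => decide (k ∈ S))).map l.get) σ u
      * pdList (((List.finRange l.length).filter (fun k => decide (k ∉ S))).map l.get) σ u

/-- The n-index Q-function (n even): `Q_{i₁…iₙ}(u) = −(1/(2σ(u)²))·(Δ_{i₁}⋯Δ_{iₙ}σ(u)σ(v))|_{v=u}`. -/
noncomputable def Qfun {g : ℕ} (σ : (Fin g → ℂ) → ℂ) (l : List (Fin g))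
    (u : Fin g → ℂ) : ℂ :=
  -(1 / (2 * (σ u) ^ 2)) * hirotaDiag σ l u

open Filter Topology

/-!
Expanding the sixteen terms of the Hirota sum gives
`−σ² Q_{ijkl} = σσ_{ijkl} − Σ σ_a σ_{bcd} + Σ σ_{ab} σ_{cd}`.
On the other side `℘_{ij} = N / σ²` with `N = σ_i σ_j − σ σ_{ij}`, and `∂_k ∂_l (N / σ²)` is obtained
by differentiating `σ² · (N / σ²) = N` twice, using only the product rule. Analyticity of `σ` makes
mixed partials commute, so both sides become polynomials in the same derivatives of `σ`, divided by
`σ⁴`, and the identity is a polynomial identity.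
-/

theorem List.map_filter_finRange_succ {α : Type*} {n : ℕ} (p : Fin (n + 1) → Bool)
    (c : Fin (n + 1) → α) :
    ((List.finRange (n + 1)).filter p).map c =
      ((List.finRange n).filter (fun k => p k.castSucc)).map (Fin.init c)
        ++ if p (Fin.last n) then [c (Fin.last n)] else [] := by
  rw [List.finRange_succ_last, List.filter_append, List.filter_map, List.map_append, List.map_map]
  cases h : p (Fin.last n) <;> simp [h] <;> rfl

theorem Fin.sum_finset_castSucc {M : Type*} [AddCommMonoid M] {n : ℕ}
    (F : Finset (Fin (n + 1)) → M) :
    ∑ S, F S = ∑ T : Finset (Fin n),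
      (F (T.map Fin.castSuccEmb) + F (insert (Fin.last n) (T.map Fin.castSuccEmb))) := by
  have himage : (Finset.univ.map Fin.castSuccEmb).powerset =
      Finset.univ.image (fun T : Finset (Fin n) => T.map Fin.castSuccEmb) := by
    ext t
    simp [Finset.subset_map_iff, eq_comm]
  rw [← Finset.powerset_univ, Fin.univ_castSuccEmb, Finset.cons_eq_insert,
    Finset.sum_powerset_insert (by simp), himage,
    Finset.sum_image (fun _ _ _ _ => Finset.map_inj.mp),
    Finset.sum_image (fun _ _ _ _ => Finset.map_inj.mp), Finset.sum_add_distrib]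

section PartialDerivatives

variable {g : ℕ} {φ ψ : (Fin g → ℂ) → ℂ} {x : Fin g → ℂ}

theorem pdList_append (A B : List (Fin g)) (φ : (Fin g → ℂ) → ℂ) :
    pdList (A ++ B) φ = pdList A (pdList B φ) :=
  List.foldr_append

theorem AnalyticAt.pd (hφ : AnalyticAt ℂ φ x) (i : Fin g) : AnalyticAt ℂ (pd i φ) x :=
  ((ContinuousLinearMap.apply ℂ ℂ (Pi.single i 1 : Fin g → ℂ)).analyticAt _).comp hφ.fderiv

theorem AnalyticAt.pdList (hφ : AnalyticAt ℂ φ x) (L : List (Fin g)) :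
    AnalyticAt ℂ (pdList L φ) x := by
  induction L with
  | nil => exact hφ
  | cons a L ih => exact ih.pd a

theorem Filter.EventuallyEq.pd (hφψ : φ =ᶠ[𝓝 x] ψ) (i : Fin g) : pd i φ =ᶠ[𝓝 x] pd i ψ :=
  hφψ.eventuallyEq_nhds.mono fun _ hy => by simp only [_root_.pd, hy.fderiv_eq]

theorem pd_add (hφ : DifferentiableAt ℂ φ x) (hψ : DifferentiableAt ℂ ψ x) (i : Fin g) :
    pd i (φ + ψ) x = pd i φ x + pd i ψ x := by
  simp [pd, fderiv_add hφ hψ]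

theorem pd_sub (hφ : DifferentiableAt ℂ φ x) (hψ : DifferentiableAt ℂ ψ x) (i : Fin g) :
    pd i (φ - ψ) x = pd i φ x - pd i ψ x := by
  simp [pd, fderiv_sub hφ hψ]

theorem pd_mul (hφ : DifferentiableAt ℂ φ x) (hψ : DifferentiableAt ℂ ψ x) (i : Fin g) :
    pd i (φ * ψ) x = pd i φ x * ψ x + φ x * pd i ψ x := by
  simp [pd, fderiv_mul hφ hψ]
  ring

theorem pd_pd_sub (hφ : AnalyticAt ℂ φ x) (hψ : AnalyticAt ℂ ψ x) (k l : Fin g) :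
    pd k (pd l (φ - ψ)) x = pd k (pd l φ) x - pd k (pd l ψ) x := by
  have hl : pd l (φ - ψ) =ᶠ[𝓝 x] pd l φ - pd l ψ := by
    filter_upwards [hφ.eventually_analyticAt, hψ.eventually_analyticAt] with y hφy hψy
    exact pd_sub hφy.differentiableAt hψy.differentiableAt l
  rw [(hl.pd k).eq_of_nhds, pd_sub (hφ.pd l).differentiableAt (hψ.pd l).differentiableAt]

theorem pd_pd_mul (hφ : AnalyticAt ℂ φ x) (hψ : AnalyticAt ℂ ψ x) (k l : Fin g) :
    pd k (pd l (φ * ψ)) x =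
      pd k (pd l φ) x * ψ x + pd l φ x * pd k ψ x + pd k φ x * pd l ψ x
        + φ x * pd k (pd l ψ) x := by
  have hl : pd l (φ * ψ) =ᶠ[𝓝 x] pd l φ * ψ + φ * pd l ψ := by
    filter_upwards [hφ.eventually_analyticAt, hψ.eventually_analyticAt] with y hφy hψy
    exact pd_mul hφy.differentiableAt hψy.differentiableAt l
  have hφ' := hφ.differentiableAt
  have hψ' := hψ.differentiableAt
  have hφl := (hφ.pd l).differentiableAt
  have hψl := (hψ.pd l).differentiableAt
  rw [(hl.pd k).eq_of_nhds, pd_add (hφl.mul hψ') (hφ'.mul hψl), pd_mul hφl hψ', pd_mul hφ' hψl]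
  ring

theorem pd_pd_div_sq (hφ : AnalyticAt ℂ φ x) (hψ : AnalyticAt ℂ ψ x) (hψ0 : ψ x ≠ 0)
    (k l : Fin g) :
    pd k (pd l (φ / ψ ^ 2)) x =
      (pd k (pd l φ) x * ψ x ^ 2
        - 2 * (pd k ψ x * pd l φ x + pd l ψ x * pd k φ x + pd k (pd l ψ) x * φ x) * ψ x
        + 6 * pd k ψ x * pd l ψ x * φ x) / ψ x ^ 4 := by
  have hq : AnalyticAt ℂ (φ / ψ ^ 2) x := hφ.div (hψ.pow 2) (pow_ne_zero 2 hψ0)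
  have hprod : ψ * ψ * (φ / ψ ^ 2) =ᶠ[𝓝 x] φ := by
    filter_upwards [hψ.continuousAt.eventually_ne hψ0] with y hy
    simp only [Pi.mul_apply, Pi.div_apply, Pi.pow_apply]
    field_simp
  have e0 : ψ x * ψ x * (φ / ψ ^ 2) x = φ x := hprod.eq_of_nhds
  have e1 (m : Fin g) : pd m (ψ * ψ * (φ / ψ ^ 2)) x = pd m φ x := (hprod.pd m).eq_of_nhds
  have e2 : pd k (pd l (ψ * ψ * (φ / ψ ^ 2))) x = pd k (pd l φ) x :=
    ((hprod.pd l).pd k).eq_of_nhds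
  have hψ' := hψ.differentiableAt
  simp only [pd_mul (hψ'.mul hψ') hq.differentiableAt, pd_mul hψ' hψ', Pi.mul_apply] at e1
  rw [pd_pd_mul (hψ.mul hψ) hq, pd_pd_mul hψ hψ, pd_mul hψ' hψ', pd_mul hψ' hψ'] at e2
  simp only [Pi.mul_apply] at e2
  rw [eq_div_iff (pow_ne_zero 4 hψ0)]
  linear_combination ψ x ^ 2 * e2 - 2 * ψ x * pd l ψ x * e1 k - 2 * ψ x * pd k ψ x * e1 l
    + (6 * pd k ψ x * pd l ψ x - 2 * ψ x * pd k (pd l ψ) x) * e0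

theorem pd_comm (hφ : AnalyticAt ℂ φ x) (a b : Fin g) : pd a (pd b φ) x = pd b (pd a φ) x := by
  have hderiv : ∀ᶠ y in 𝓝 x, HasFDerivAt φ (fderiv ℂ φ y) y :=
    hφ.eventually_analyticAt.mono fun y hy => hy.differentiableAt.hasFDerivAt
  have hsymm :=
    second_derivative_symmetric_of_eventually hderiv hφ.fderiv.differentiableAt.hasFDerivAt
  have hpd (v w : Fin g → ℂ) :
      fderiv ℂ (fun y => fderiv ℂ φ y v) x w = fderiv ℂ (fderiv ℂ φ) x w v := by
    rw [fderiv_clm_apply hφ.fderiv.differentiableAt (differentiableAt_const v)]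
    simp
  exact (hpd _ _).trans ((hsymm _ _).trans (hpd _ _).symm)

theorem pdList_perm {L L' : List (Fin g)} (hL : L.Perm L') :
    ∀ {x}, AnalyticAt ℂ φ x → pdList L φ x = pdList L' φ x := by
  induction hL with
  | nil => exact fun _ => rfl
  | cons a _ ih =>
    intro x hφ
    have hnear : pdList _ φ =ᶠ[𝓝 x] pdList _ φ :=
      hφ.eventually_analyticAt.mono fun _ hy => ih hy
    exact (hnear.pd a).eq_of_nhds
  | swap a b L => exact fun hφ => pd_comm (hφ.pdList L) b a
  | trans _ _ ih ih' => exact fun hφ => (ih hφ).trans (ih' hφ)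

theorem pdList_comm (hφ : AnalyticAt ℂ φ x) (A B : List (Fin g)) :
    pdList A (pdList B φ) x = pdList B (pdList A φ) x := by
  simpa only [pdList_append] using pdList_perm List.perm_append_comm hφ

end PartialDerivatives

section Hirota

variable {g : ℕ}

/-- `(Δ_{c 0} ⋯ Δ_{c (n-1)} φ(u) ψ(v))|_{v=u}`, with the indices given by a function on `Fin n` so
that they can be peeled off one at a time; `hirotaDiag σ l` is `hirotaBilinear σ σ l.get`. -/
noncomputable def hirotaBilinear (φ ψ : (Fin g → ℂ) → ℂ) {n : ℕ} (c : Fin n → Fin g)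
    (u : Fin g → ℂ) : ℂ :=
  ∑ S : Finset (Fin n),
    (-1 : ℂ) ^ S.card
      * pdList (((List.finRange n).filter (fun k => decide (k ∈ S))).map c) φ u
      * pdList (((List.finRange n).filter (fun k => decide (k ∉ S))).map c) ψ u

theorem hirotaBilinear_zero (φ ψ : (Fin g → ℂ) → ℂ) (c : Fin 0 → Fin g) (u : Fin g → ℂ) :
    hirotaBilinear φ ψ c u = φ u * ψ u := by
  rw [hirotaBilinear, Fintype.sum_subsingleton _ ∅]
  simp [pdList]

theorem hirotaBilinear_succ (φ ψ : (Fin g → ℂ) → ℂ) {n : ℕ} (c : Fin (n + 1) → Fin g)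
    (u : Fin g → ℂ) :
    hirotaBilinear φ ψ c u =
      hirotaBilinear φ (pd (c (Fin.last n)) ψ) (Fin.init c) u
        - hirotaBilinear (pd (c (Fin.last n)) φ) ψ (Fin.init c) u := by
  rw [hirotaBilinear, Fin.sum_finset_castSucc, hirotaBilinear, hirotaBilinear,
    ← Finset.sum_sub_distrib]
  refine Finset.sum_congr rfl fun T _ => ?_
  have hlast : Fin.last n ∉ T.map Fin.castSuccEmb := by simp [Fin.castSucc_ne_last]
  have hmem (k : Fin n) : k.castSucc ∈ T.map Fin.castSuccEmb ↔ k ∈ T := Finset.mem_map' _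
  simp only [List.map_filter_finRange_succ, Finset.mem_insert, hmem, hlast, Fin.castSucc_ne_last,
    Finset.card_insert_of_notMem hlast, Finset.card_map, pdList_append]
  simp [pdList]
  ring

theorem hirotaDiag_four (σ : (Fin g → ℂ) → ℂ) (i j k l : Fin g) (u : Fin g → ℂ) :
    hirotaDiag σ [i, j, k, l] u =
      2 * (σ u * pd i (pd j (pd k (pd l σ))) u
        - pd i σ u * pd j (pd k (pd l σ)) u - pd j σ u * pd i (pd k (pd l σ)) u
        - pd k σ u * pd i (pd j (pd l σ)) u - pd l σ u * pd i (pd j (pd k σ)) u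
        + pd i (pd j σ) u * pd k (pd l σ) u + pd i (pd k σ) u * pd j (pd l σ) u
        + pd i (pd l σ) u * pd j (pd k σ) u) := by
  change hirotaBilinear σ σ [i, j, k, l].get u = _
  simp only [hirotaBilinear_succ, hirotaBilinear_zero, Fin.init, List.get_eq_getElem, Fin.val_last,
    Fin.val_castSucc, List.length_cons, List.length_nil, List.getElem_cons_succ,
    List.getElem_cons_zero]
  ring

end Hirota

section WeierstrassNumerator

variable {g : ℕ} {σ : (Fin g → ℂ) → ℂ} {x : Fin g → ℂ}

noncomputable def wp2Num (σ : (Fin g → ℂ) → ℂ) (i j : Fin g) : (Fin g → ℂ) → ℂ :=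
  pd i σ * pd j σ - σ * pd i (pd j σ)

theorem AnalyticAt.wp2Num (hσ : AnalyticAt ℂ σ x) (i j : Fin g) :
    AnalyticAt ℂ (wp2Num σ i j) x :=
  ((hσ.pd i).mul (hσ.pd j)).sub (hσ.mul ((hσ.pd j).pd i))

theorem pd_wp2Num (hσ : AnalyticAt ℂ σ x) (i j m : Fin g) :
    pd m (wp2Num σ i j) x =
      pd i (pd m σ) x * pd j σ x + pd i σ x * pd j (pd m σ) x
        - pd m σ x * pd i (pd j σ) x - σ x * pd i (pd j (pd m σ)) x := by
  have hσ' := hσ.differentiableAt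
  have hi := (hσ.pd i).differentiableAt
  have hj := (hσ.pd j).differentiableAt
  have hij := ((hσ.pd j).pd i).differentiableAt
  rw [wp2Num, pd_sub (hi.mul hj) (hσ'.mul hij), pd_mul hi hj, pd_mul hσ' hij,
    show pd m (pd i σ) x = pd i (pd m σ) x from pdList_comm hσ [m] [i],
    show pd m (pd j σ) x = pd j (pd m σ) x from pdList_comm hσ [m] [j],
    show pd m (pd i (pd j σ)) x = pd i (pd j (pd m σ)) x from pdList_comm hσ [m] [i, j]]
  ring

theorem pd_pd_wp2Num (hσ : AnalyticAt ℂ σ x) (i j k l : Fin g) :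
    pd k (pd l (wp2Num σ i j)) x =
      pd i (pd k (pd l σ)) x * pd j σ x + pd i (pd l σ) x * pd j (pd k σ) x
        + pd i (pd k σ) x * pd j (pd l σ) x + pd i σ x * pd j (pd k (pd l σ)) x
        - pd k (pd l σ) x * pd i (pd j σ) x - pd l σ x * pd i (pd j (pd k σ)) x
        - pd k σ x * pd i (pd j (pd l σ)) x - σ x * pd i (pd j (pd k (pd l σ))) x := by
  rw [wp2Num, pd_pd_sub ((hσ.pd i).mul (hσ.pd j)) (hσ.mul ((hσ.pd j).pd i)),
    pd_pd_mul (hσ.pd i) (hσ.pd j), pd_pd_mul hσ ((hσ.pd j).pd i),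
    show pd k (pd l (pd i σ)) x = pd i (pd k (pd l σ)) x from pdList_comm hσ [k, l] [i],
    show pd k (pd l (pd j σ)) x = pd j (pd k (pd l σ)) x from pdList_comm hσ [k, l] [j],
    show pd l (pd i σ) x = pd i (pd l σ) x from pdList_comm hσ [l] [i],
    show pd l (pd j σ) x = pd j (pd l σ) x from pdList_comm hσ [l] [j],
    show pd k (pd i σ) x = pd i (pd k σ) x from pdList_comm hσ [k] [i],
    show pd k (pd j σ) x = pd j (pd k σ) x from pdList_comm hσ [k] [j],
    show pd l (pd i (pd j σ)) x = pd i (pd j (pd l σ)) x from pdList_comm hσ [l] [i, j],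
    show pd k (pd i (pd j σ)) x = pd i (pd j (pd k σ)) x from pdList_comm hσ [k] [i, j],
    show pd k (pd l (pd i (pd j σ))) x = pd i (pd j (pd k (pd l σ))) x from
      pdList_comm hσ [k, l] [i, j]]
  ring

end WeierstrassNumerator

theorem four_index_Q_in_terms_of_wp_general {g : ℕ} (U : Set (Fin g → ℂ))
    (σ : (Fin g → ℂ) → ℂ) (hσ : AnalyticOnNhd ℂ σ U) (u : Fin g → ℂ) (hu : u ∈ U)
    (hσ0 : σ u ≠ 0) (i j k l : Fin g) :
    Qfun σ [i, j, k, l] u =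
      wpN σ i j [k, l] u
      - 2 * wp2 σ i j u * wp2 σ k l u
      - 2 * wp2 σ i k u * wp2 σ j l u
      - 2 * wp2 σ i l u * wp2 σ j k u := by
  have hσu := hσ u hu
  have hwpN : wpN σ i j [k, l] u = pd k (pd l (wp2Num σ i j / σ ^ 2)) u := rfl
  rw [Qfun, hirotaDiag_four, hwpN, pd_pd_div_sq (hσu.wp2Num i j) hσu hσ0, pd_pd_wp2Num hσu,
    pd_wp2Num hσu, pd_wp2Num hσu]
  simp only [wp2, wp2Num, Pi.sub_apply, Pi.mul_apply]
  field_simp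
  ring

/-- the 4-index Q-function in terms of Kleinian ℘-functions. -/
theorem four_index_Q_in_terms_of_wp {g : ℕ} (hg : 1 ≤ g) (U : Set (Fin g → ℂ)) (hU : IsOpen U)
    (σ : (Fin g → ℂ) → ℂ) (hσ : AnalyticOnNhd ℂ σ U) (u : Fin g → ℂ) (hu : u ∈ U)
    (hσ0 : σ u ≠ 0) (i j k l : Fin g) :
    Qfun σ [i, j, k, l] u =
      wpN σ i j [k, l] u
      - 2 * wp2 σ i j u * wp2 σ k l u
      - 2 * wp2 σ i k u * wp2 σ j l u
      - 2 * wp2 σ i l u * wp2 σ j k u :=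
  four_index_Q_in_terms_of_wp_general U σ hσ u hu hσ0 i j k l
end

section
/- Let U ⊆ ℂ^6 be open and let σ : (Fin 6 → ℂ) → ℂ be analytic and nonvanishing on U. Suppose that on all of U the Kleinian ℘-functions of σ satisfy the two relations ℘_{6666} = 6·℘_{66}² − 3·℘_{55} + 4·℘_{46} and ℘_{5666} = 6·℘_{56}·℘_{66} − 2·℘_{45}. Then on all of U the bilinear relation 0 = −℘_{555} + 2·℘_{456} + 2·℘_{566}·℘_{66} − 2·℘_{56}·℘_{666} holds. -/
open scoped BigOperators

/-!
Where `σ ≠ 0` we have `℘_{ij} = −∂_i(∂_jσ/σ)`, so by the symmetry of mixed partial derivatives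
of analytic functions `℘_{i₁…iₙ}` is symmetric in all of its indices. Differentiating the first
relation in `u₅` and the second in `u₆` therefore gives two expressions for `℘_{56666}`; their
difference is three times the right-hand side of the bilinear relation.
-/

open Set Topology

section PartialDerivative

variable {n : ℕ} {U : Set (Fin n → ℂ)} {f h : (Fin n → ℂ) → ℂ} {u : Fin n → ℂ}

theorem pd_congr (hfh : f =ᶠ[𝓝 u] h) (i : Fin n) : pd i f u = pd i h u := by
  rw [pd, pd, hfh.fderiv_eq]

theorem Set.EqOn.pd (hU : IsOpen U) (hfh : EqOn f h U) (i : Fin n) :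
    EqOn (pd i f) (pd i h) U :=
  fun _ hu => pd_congr (hfh.eventuallyEq_of_mem (hU.mem_nhds hu)) i

theorem Set.EqOn.pdList (hU : IsOpen U) (hfh : EqOn f h U) (l : List (Fin n)) :
    EqOn (pdList l f) (pdList l h) U := by
  induction l with
  | nil => exact hfh
  | cons i l ih => exact ih.pd hU i

theorem pd_neg (i : Fin n) : pd i (-f) u = -pd i f u := by
  simp [pd, fderiv_neg]

theorem pd_add_s6 (hf : DifferentiableAt ℂ f u) (hh : DifferentiableAt ℂ h u) (i : Fin n) :
    pd i (fun v => f v + h v) u = pd i f u + pd i h u := by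
  simp [pd, fderiv_fun_add hf hh]

theorem pd_sub_s6 (hf : DifferentiableAt ℂ f u) (hh : DifferentiableAt ℂ h u) (i : Fin n) :
    pd i (fun v => f v - h v) u = pd i f u - pd i h u := by
  simp [pd, fderiv_fun_sub hf hh]

theorem pd_mul_s6 (hf : DifferentiableAt ℂ f u) (hh : DifferentiableAt ℂ h u) (i : Fin n) :
    pd i (fun v => f v * h v) u = pd i f u * h u + f u * pd i h u := by
  simp [pd, fderiv_fun_mul hf hh]
  ring

theorem pd_const (c : ℂ) (i : Fin n) : pd i (fun _ => c) u = 0 := by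
  simp [pd]

theorem pd_pow (hf : DifferentiableAt ℂ f u) (k : ℕ) (i : Fin n) :
    pd i (fun v => f v ^ k) u = k * f u ^ (k - 1) * pd i f u := by
  simp [pd, fderiv_fun_pow k hf]

theorem AnalyticOnNhd.pd (hf : AnalyticOnNhd ℂ f U) (i : Fin n) : AnalyticOnNhd ℂ (pd i f) U :=
  (ContinuousLinearMap.apply ℂ ℂ (Pi.single i 1)).comp_analyticOnNhd hf.fderiv (f := fderiv ℂ f)

theorem AnalyticOnNhd.pdList (hf : AnalyticOnNhd ℂ f U) (l : List (Fin n)) :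
    AnalyticOnNhd ℂ (pdList l f) U := by
  induction l with
  | nil => exact hf
  | cons i l ih => exact ih.pd i

theorem pd_comm_s6 (hf : AnalyticAt ℂ f u) (i j : Fin n) : pd i (pd j f) u = pd j (pd i f) u := by
  have hsymm : IsSymmSndFDerivAt ℂ f u := (hf.contDiffAt (n := 2)).isSymmSndFDerivAt (by simp)
  have hpd : ∀ a b : Fin n,
      pd a (pd b f) u = fderiv ℂ (fderiv ℂ f) u (Pi.single a 1) (Pi.single b 1) := by
    intro a b
    change fderiv ℂ (fun v => fderiv ℂ f v (Pi.single b 1)) u (Pi.single a 1) = _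
    simp [fderiv_clm_apply hf.fderiv.differentiableAt (differentiableAt_const _)]
  rw [hpd, hpd, hsymm]

theorem pd_pdList_comm (hU : IsOpen U) (hf : AnalyticOnNhd ℂ f U) (hu : u ∈ U) (i : Fin n)
    (l : List (Fin n)) : pd i (pdList l f) u = pdList l (pd i f) u := by
  induction l generalizing u with
  | nil => rfl
  | cons j l ih =>
    calc pd i (pd j (pdList l f)) u
        = pd j (pd i (pdList l f)) u := pd_comm_s6 (hf.pdList l u hu) i j
      _ = pd j (pdList l (pd i f)) u := (EqOn.pd hU (fun _ hv => ih hv) j) hu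

end PartialDerivative

section Kleinian

variable {n : ℕ} {U : Set (Fin n → ℂ)} {σ : (Fin n → ℂ) → ℂ} {u : Fin n → ℂ}

theorem wpN_nil (σ : (Fin n → ℂ) → ℂ) (i j : Fin n) : wpN σ i j [] = wp2 σ i j := rfl

theorem wpN_cons (σ : (Fin n → ℂ) → ℂ) (i j k : Fin n) (l : List (Fin n)) :
    wpN σ i j (k :: l) = pd k (wpN σ i j l) := rfl

theorem analyticOnNhd_wp2 (hσ : AnalyticOnNhd ℂ σ U) (hσ0 : ∀ v ∈ U, σ v ≠ 0) (i j : Fin n) :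
    AnalyticOnNhd ℂ (wp2 σ i j) U :=
  (((hσ.pd i).mul (hσ.pd j)).sub (hσ.mul ((hσ.pd j).pd i))).div (hσ.pow 2)
    fun v hv => pow_ne_zero 2 (hσ0 v hv)

theorem wp2_comm (hσ : AnalyticOnNhd ℂ σ U) (hu : u ∈ U) (i j : Fin n) :
    wp2 σ i j u = wp2 σ j i u := by
  simp only [wp2, pd_comm_s6 (hσ u hu) i j]
  ring

theorem pd_logDeriv_eq_neg_wp2 (hU : IsOpen U) (hσ : AnalyticOnNhd ℂ σ U)
    (hσ0 : ∀ v ∈ U, σ v ≠ 0) (hu : u ∈ U) (i j : Fin n) :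
    pd i (fun v => pd j σ v / σ v) u = -wp2 σ i j u := by
  have hL : DifferentiableAt ℂ (fun v => pd j σ v / σ v) u :=
    ((hσ.pd j).div hσ hσ0 u hu).differentiableAt
  have hprod : pd i (fun v => σ v * (pd j σ v / σ v)) u = pd i (pd j σ) u :=
    EqOn.pd hU (fun v hv => mul_div_cancel₀ _ (hσ0 v hv)) i hu
  rw [pd_mul_s6 (hσ u hu).differentiableAt hL] at hprod
  have hσu := hσ0 u hu
  simp only [wp2]
  field_simp at hprod ⊢
  linear_combination hprod

theorem pd_wp2_swap_left (hU : IsOpen U) (hσ : AnalyticOnNhd ℂ σ U) (hσ0 : ∀ v ∈ U, σ v ≠ 0)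
    (hu : u ∈ U) (i j k : Fin n) : pd k (wp2 σ i j) u = pd i (wp2 σ k j) u := by
  set L := fun v => pd j σ v / σ v
  have hwp : ∀ a b, pd a (wp2 σ b j) u = -pd a (pd b L) u := by
    intro a b
    rw [← pd_neg]
    refine EqOn.pd hU (fun v hv => ?_) a hu
    simp [L, pd_logDeriv_eq_neg_wp2 hU hσ hσ0 hv]
  rw [hwp, hwp, pd_comm_s6 ((hσ.pd j).div hσ hσ0 u hu)]

theorem pd_wp2_swap_right (hU : IsOpen U) (hσ : AnalyticOnNhd ℂ σ U) (hσ0 : ∀ v ∈ U, σ v ≠ 0)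
    (hu : u ∈ U) (i j k : Fin n) : pd k (wp2 σ i j) u = pd j (wp2 σ i k) u :=
  calc pd k (wp2 σ i j) u
      = pd k (wp2 σ j i) u := EqOn.pd hU (fun _ hv => wp2_comm hσ hv i j) k hu
    _ = pd j (wp2 σ k i) u := pd_wp2_swap_left hU hσ hσ0 hu j i k
    _ = pd j (wp2 σ i k) u := EqOn.pd hU (fun _ hv => wp2_comm hσ hv k i) j hu

theorem wpN_cons_swap (hU : IsOpen U) (hσ : AnalyticOnNhd ℂ σ U) (hσ0 : ∀ v ∈ U, σ v ≠ 0)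
    (hu : u ∈ U) (i j k : Fin n) (l : List (Fin n)) :
    wpN σ i j (k :: l) u = wpN σ k j (i :: l) u :=
  calc pd k (pdList l (wp2 σ i j)) u
      = pdList l (pd k (wp2 σ i j)) u :=
        pd_pdList_comm hU (analyticOnNhd_wp2 hσ hσ0 i j) hu k l
    _ = pdList l (pd i (wp2 σ k j)) u :=
        EqOn.pdList hU (fun _ hv => pd_wp2_swap_left hU hσ hσ0 hv i j k) l hu
    _ = pd i (pdList l (wp2 σ k j)) u :=
        (pd_pdList_comm hU (analyticOnNhd_wp2 hσ hσ0 k j) hu i l).symm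

end Kleinian

/-- Indices: `u₆, u₅, u₄` are the coordinates `5, 4, 3 : Fin 6`. -/
theorem bilinear_relation_weight_six (U : Set (Fin 6 → ℂ)) (hU : IsOpen U)
    (σ : (Fin 6 → ℂ) → ℂ) (hσ : AnalyticOnNhd ℂ σ U) (hσ0 : ∀ u ∈ U, σ u ≠ 0)
    (hrel1 : ∀ u ∈ U,
      wpN σ 5 5 [5, 5] u
        = 6 * (wp2 σ 5 5 u) ^ 2 - 3 * wp2 σ 4 4 u + 4 * wp2 σ 3 5 u)
    (hrel2 : ∀ u ∈ U,
      wpN σ 4 5 [5, 5] u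
        = 6 * wp2 σ 4 5 u * wp2 σ 5 5 u - 2 * wp2 σ 3 4 u) :
    ∀ u ∈ U,
      0 = - wpN σ 4 4 [4] u + 2 * wpN σ 3 4 [5] u
          + 2 * wpN σ 4 5 [5] u * wp2 σ 5 5 u
          - 2 * wp2 σ 4 5 u * wpN σ 5 5 [5] u := by
  intro u hu
  have hd : ∀ i j, DifferentiableAt ℂ (wp2 σ i j) u :=
    fun i j => (analyticOnNhd_wp2 hσ hσ0 i j u hu).differentiableAt
  have hdiff1 : wpN σ 5 5 [4, 5, 5] u
      = 12 * wp2 σ 5 5 u * wpN σ 4 5 [5] u - 3 * wpN σ 4 4 [4] u + 4 * wpN σ 3 4 [5] u := by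
    rw [wpN_cons, EqOn.pd hU hrel1 4 hu]
    simp (disch := fun_prop) only [pd_add_s6, pd_sub_s6, pd_mul_s6, pd_pow, pd_const]
    rw [pd_wp2_swap_left hU hσ hσ0 hu 5 5 4, pd_wp2_swap_right hU hσ hσ0 hu 3 5 4]
    simp only [wpN_cons, wpN_nil]
    ring
  have hdiff2 : wpN σ 4 5 [5, 5, 5] u
      = 6 * wpN σ 4 5 [5] u * wp2 σ 5 5 u + 6 * wp2 σ 4 5 u * wpN σ 5 5 [5] u
        - 2 * wpN σ 3 4 [5] u := by
    rw [wpN_cons, EqOn.pd hU hrel2 5 hu]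
    simp (disch := fun_prop) only [pd_sub_s6, pd_mul_s6, pd_const]
    simp only [wpN_cons, wpN_nil]
    ring
  have hcross := wpN_cons_swap hU hσ hσ0 hu 5 5 4 [5, 5]
  rw [hdiff1, hdiff2] at hcross
  linear_combination -hcross / 3
end
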